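/- arXiv:2202.01184 — 3 statements merged into one kernel-verified Lean document; each statement's English description precedes it below -/
import Mathlib

section
/- Let (V, q) be a nondegenerate quadratic space of dimension d ≥ 3 over a field of characteristic zero, and let v, w ∈ V be nonzero vectors. If every skew-adjoint endomorphism A ∈ so(V,q) with A(v) = 0 also satisfies A(w) = 0, then w is a scalar multiple of v. -/
/-!
For `a, b ⊥ v` the rank-two endomorphism `a ∧ b : x ↦ B a x • b - B b x • a` is skew-adjoint and
kills `v`, so by hypothesis it kills `w`: `B w a • b = B w b • a`. If some `a ⊥ v` had
`B w a ≠ 0`, every `b ⊥ v` would be a multiple of `a`, so `v⊥` would have dimension at most one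
and `V` at most two. Hence `v⊥ ⊆ w⊥`, so `B w` is a multiple of `B v`, and nondegeneracy gives
`w ∈ k ∙ v`.
-/

open LinearMap (BilinForm ker)
open Module (finrank)

namespace Module.Dual

variable {k V : Type*} [Field k] [AddCommGroup V] [Module k V]

theorem exists_eq_smul_of_ker_le {f g : Module.Dual k V} (h : ker f ≤ ker g) :
    ∃ c : k, g = c • f := by
  have hspan := mem_span_of_iInf_ker_le_ker (L := fun _ : Unit ↦ f) (K := g) (by simpa using h)
  rw [Set.range_const, Submodule.mem_span_singleton] at hspan
  obtain ⟨c, hc⟩ := hspan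
  exact ⟨c, hc.symm⟩

theorem ker_le_ker_of_smul_comm [FiniteDimensional k V] (hd : 3 ≤ finrank k V)
    {f g : Module.Dual k V} (h : ∀ a ∈ ker f, ∀ b ∈ ker f, g a • b = g b • a) :
    ker f ≤ ker g := by
  intro a ha
  by_contra hga
  have hker : ker f ≤ k ∙ a := fun b hb ↦
    Submodule.mem_span_singleton.mpr ⟨g b / g a, by
      rw [div_eq_inv_mul, mul_smul, ← h a ha b hb, inv_smul_smul₀ hga]⟩
  have hker_le : finrank k (ker f) ≤ 1 :=
    (Submodule.finrank_mono hker).trans <| (finrank_span_le_card {a}).trans_eq <| by simp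
  have hrange_le : finrank k (LinearMap.range f) ≤ 1 :=
    (Submodule.finrank_le _).trans_eq (finrank_self k)
  have := f.finrank_range_add_finrank_ker
  omega

end Module.Dual

namespace LinearMap.BilinForm

variable {R M : Type*} [CommRing R] [AddCommGroup M] [Module R M]

def wedge (B : BilinForm R M) (a b : M) : Module.End R M :=
  (B a).smulRight b - (B b).smulRight a

variable {B : BilinForm R M}

@[simp]
theorem wedge_apply (a b x : M) : B.wedge a b x = B a x • b - B b x • a := rfl

theorem wedge_mem_skewAdjointLieSubalgebra (hsymm : ∀ x y, B x y = B y x) (a b : M) :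
    B.wedge a b ∈ skewAdjointLieSubalgebra B := by
  refine (LinearMap.mem_skewAdjointSubmodule _).mpr fun x y ↦ ?_
  change B (B.wedge a b x) y = B x (-B.wedge a b y)
  simp only [wedge_apply, map_neg, map_sub, map_smul, LinearMap.sub_apply, LinearMap.smul_apply,
    smul_eq_mul, hsymm x a, hsymm x b]
  ring

theorem smul_comm_of_forall_skewAdjoint (hsymm : ∀ x y, B x y = B y x) {v w : M}
    (hann : ∀ A : Module.End R M, A ∈ skewAdjointLieSubalgebra B → A v = 0 → A w = 0)
    {a b : M} (ha : B v a = 0) (hb : B v b = 0) : B w a • b = B w b • a := by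
  have hwedge := hann _ (wedge_mem_skewAdjointLieSubalgebra hsymm a b)
    (by rw [wedge_apply, hsymm a, hsymm b, ha, hb, zero_smul, zero_smul, sub_zero])
  rwa [wedge_apply, hsymm a, hsymm b, sub_eq_zero] at hwedge

end LinearMap.BilinForm

theorem stmt_5_general {k V : Type*} [Field k]
    [AddCommGroup V] [Module k V] [FiniteDimensional k V]
    (B : LinearMap.BilinForm k V) (hB : B.Nondegenerate) (hsymm : ∀ x y, B x y = B y x)
    (hd : 3 ≤ Module.finrank k V)
    (v w : V)
    (hann : ∀ A : Module.End k V, A ∈ skewAdjointLieSubalgebra B → A v = 0 → A w = 0) :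
    ∃ c : k, w = c • v := by
  have hker : ker (B v) ≤ ker (B w) :=
    Module.Dual.ker_le_ker_of_smul_comm hd fun a ha b hb ↦
      B.smul_comm_of_forall_skewAdjoint hsymm hann ha hb
  obtain ⟨c, hc⟩ := Module.Dual.exists_eq_smul_of_ker_le hker
  refine ⟨c, LinearMap.ker_eq_bot.mp hB.ker_eq_bot ?_⟩
  rw [hc, map_smul]

/-- In a nondegenerate quadratic space of dimension `d ≥ 3` over a field of characteristic
zero, if every skew-adjoint endomorphism annihilating a nonzero vector `v` also annihilates
the nonzero vector `w`, then `w` is a scalar multiple of `v`. -/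
theorem stmt_5 {k V : Type*} [Field k] [CharZero k]
    [AddCommGroup V] [Module k V] [FiniteDimensional k V]
    (B : LinearMap.BilinForm k V) (hB : B.Nondegenerate) (hsymm : ∀ x y, B x y = B y x)
    (hd : 3 ≤ Module.finrank k V)
    (v w : V) (hv : v ≠ 0) (hw : w ≠ 0)
    (hann : ∀ A : Module.End k V, A ∈ skewAdjointLieSubalgebra B → A v = 0 → A w = 0) :
    ∃ c : k, w = c • v :=
  stmt_5_general B hB hsymm hd v w hann
end

section
/- Let (V, q) be a nondegenerate quadratic space over a field of characteristic zero with dim V ≥ 2, and for n ≥ 2 define the Laplacian Δ : Symⁿ(V) → Sym^{n-2}(V) on pure tensors by Δ(v₁⋯vₙ) = Σ_{i<j} b(vᵢ,vⱼ)·v₁⋯v̂ᵢ⋯v̂ⱼ⋯vₙ, where b is the bilinear form of q. Then Δ is surjective. -/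
/-!
Write `L = ∑ᵢⱼ Aᵢⱼ ∂ᵢ∂ⱼ` for the Gram matrix `A` of the form, and let `r = ∑ₐᵦ gₐᵦ XₐXᵦ` be the
quadratic polynomial of the inverse matrix `g = A⁻¹`. Since `∂ᵢr = 2ℓᵢ` for the linear forms
`ℓᵢ = ∑ᵦ gᵢᵦ Xᵦ`, which satisfy `∑ⱼ Aᵢⱼ ℓⱼ = Xᵢ`, the Leibniz rule and Euler's identity give
`L(r p) = r L p + 2(d + 2e) p` for `p` homogeneous of degree `e`; iterating,
`L(r^(j+1) q) = r^(j+1) L q + 2(j+1)(d+2e+2j) r^j q`. The coefficient is nonzero in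
characteristic zero and `L q` has degree `e - 2`, so strong induction on `e` puts every `r^j q`
in the image of `L`; the case `j = 0` is surjectivity.
-/

namespace MvPolynomial

variable {σ R : Type*} [Fintype σ] [CommRing R]

noncomputable def laplacian (A : Matrix σ σ R) : MvPolynomial σ R →ₗ[R] MvPolynomial σ R :=
  ∑ i, ∑ j, A i j • (pderiv i).toLinearMap ∘ₗ (pderiv j).toLinearMap

section Laplacian

variable (A : Matrix σ σ R)

theorem laplacian_apply (p : MvPolynomial σ R) :
    laplacian A p = ∑ i, ∑ j, A i j • pderiv i (pderiv j p) := by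
  simp [laplacian, LinearMap.sum_apply]

theorem IsHomogeneous.laplacian {n : ℕ} {p : MvPolynomial σ R} (hp : p.IsHomogeneous n) :
    (laplacian A p).IsHomogeneous (n - 2) := by
  rw [← mem_homogeneousSubmodule, laplacian_apply]
  refine Submodule.sum_mem _ fun i _ ↦ Submodule.sum_mem _ fun j _ ↦ Submodule.smul_mem _ _ ?_
  simpa [Nat.sub_sub] using (hp.pderiv (i := j)).pderiv (i := i)

theorem laplacian_eq_zero_of_isHomogeneous {n : ℕ} {p : MvPolynomial σ R}
    (hp : p.IsHomogeneous n) (hn : n < 2) : laplacian A p = 0 := by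
  have hzero (i j : σ) : pderiv i (pderiv j p) = 0 := by
    have hconst : (pderiv j p).IsHomogeneous 0 := by
      simpa [show n - 1 = 0 by omega] using hp.pderiv (i := j)
    rw [totalDegree_eq_zero_iff_eq_C.mp ((totalDegree_zero_iff_isHomogeneous σ).mpr hconst),
      pderiv_C]
  simp [laplacian_apply, hzero]

theorem laplacian_mul (f p : MvPolynomial σ R) :
    laplacian A (f * p) = laplacian A f * p + f * laplacian A p +
      ∑ i, ∑ j, A i j • (pderiv j f * pderiv i p + pderiv i f * pderiv j p) := by
  simp only [laplacian_apply, Derivation.leibniz, map_add, smul_eq_mul]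
  simp only [Finset.sum_mul, Finset.mul_sum, ← Finset.sum_add_distrib]
  refine Finset.sum_congr rfl fun i _ ↦ Finset.sum_congr rfl fun j _ ↦ ?_
  simp only [smul_eq_C_mul]
  ring

end Laplacian

section QuadPoly

variable (g : Matrix σ σ R)

noncomputable def linPoly (a : σ) : MvPolynomial σ R := ∑ b, C (g a b) * X b

noncomputable def quadPoly : MvPolynomial σ R := ∑ a, X a * linPoly g a

theorem isHomogeneous_linPoly (a : σ) : (linPoly g a).IsHomogeneous 1 :=
  IsHomogeneous.sum _ _ _ fun b _ ↦ by
    simpa using (isHomogeneous_C σ (g a b)).mul (isHomogeneous_X R b)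

theorem isHomogeneous_quadPoly : (quadPoly g).IsHomogeneous 2 :=
  IsHomogeneous.sum _ _ _ fun a _ ↦ (isHomogeneous_X R a).mul (isHomogeneous_linPoly g a)

variable [DecidableEq σ]

theorem pderiv_linPoly (i a : σ) : pderiv i (linPoly g a) = C (g a i) := by
  simp [linPoly, pderiv_X, Pi.single_apply]

theorem pderiv_quadPoly (hg : g.IsSymm) (i : σ) : pderiv i (quadPoly g) = 2 • linPoly g i := by
  simp only [quadPoly, map_sum, Derivation.leibniz, pderiv_X, pderiv_linPoly, smul_eq_mul,
    Pi.single_apply, mul_ite, mul_one, mul_zero, Finset.sum_add_distrib, Finset.sum_ite_eq',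
    Finset.mem_univ, if_true, two_nsmul, add_comm (linPoly g i)]
  congr 1
  exact Finset.sum_congr rfl fun a _ ↦ by rw [hg.apply, mul_comm]

variable {A : Matrix σ σ R}

theorem sum_smul_linPoly (hAg : A * g = 1) (i : σ) : ∑ j, A i j • linPoly g j = X i := by
  simp only [linPoly, Finset.smul_sum, smul_eq_C_mul, ← mul_assoc, ← C_mul]
  rw [Finset.sum_comm]
  simp only [← Finset.sum_mul, ← map_sum, ← Matrix.mul_apply, hAg, Matrix.one_apply, apply_ite C,
    C_1, C_0, ite_mul, one_mul, zero_mul, Finset.sum_ite_eq, Finset.mem_univ, if_true]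

theorem laplacian_quadPoly (hg : g.IsSymm) (hAg : A * g = 1) :
    laplacian A (quadPoly g) = 2 * Fintype.card σ := by
  have htrace : ∑ i, ∑ j, A i j * g j i = Fintype.card σ := by
    simpa [Matrix.trace, Matrix.mul_apply] using congrArg Matrix.trace hAg
  simp only [laplacian_apply, pderiv_quadPoly g hg, map_nsmul, pderiv_linPoly]
  simp only [smul_eq_C_mul, nsmul_eq_mul, Nat.cast_ofNat, mul_left_comm _ (2 : MvPolynomial σ R),
    ← Finset.mul_sum, ← C_mul, ← map_sum, htrace, map_natCast]

theorem sum_sum_smul_linPoly_mul (hAg : A * g = 1) (q : σ → MvPolynomial σ R) :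
    ∑ i, ∑ j, A i j • (linPoly g j * q i) = ∑ i, X i * q i := by
  simp only [← smul_mul_assoc, ← Finset.sum_mul, sum_smul_linPoly g hAg]

theorem laplacian_quadPoly_mul (hA : A.IsSymm) (hg : g.IsSymm) (hAg : A * g = 1) {e : ℕ}
    {p : MvPolynomial σ R} (hp : p.IsHomogeneous e) :
    laplacian A (quadPoly g * p) =
      quadPoly g * laplacian A p + (2 * (Fintype.card σ + 2 * e) : R) • p := by
  have hswap : ∑ i, ∑ j, A i j • (linPoly g i * pderiv j p) =
      ∑ i, ∑ j, A i j • (linPoly g j * pderiv i p) := by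
    rw [Finset.sum_comm]
    exact Finset.sum_congr rfl fun i _ ↦ Finset.sum_congr rfl fun j _ ↦ by rw [hA.apply]
  have hcross : ∑ i, ∑ j, A i j •
      (pderiv j (quadPoly g) * pderiv i p + pderiv i (quadPoly g) * pderiv j p) = (4 * e) • p := by
    simp only [pderiv_quadPoly g hg, smul_mul_assoc, smul_add, Finset.sum_add_distrib,
      smul_comm (A _ _) 2, ← Finset.smul_sum, hswap, sum_sum_smul_linPoly_mul g hAg,
      hp.sum_X_mul_pderiv]
    module
  rw [laplacian_mul, laplacian_quadPoly g hg hAg, hcross]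
  simp only [smul_eq_C_mul, nsmul_eq_mul, map_mul, map_add, map_natCast, map_ofNat]
  push_cast
  ring

theorem laplacian_quadPoly_pow_mul (hA : A.IsSymm) (hg : g.IsSymm) (hAg : A * g = 1) {e : ℕ}
    {p : MvPolynomial σ R} (hp : p.IsHomogeneous e) (j : ℕ) :
    laplacian A (quadPoly g ^ (j + 1) * p) = quadPoly g ^ (j + 1) * laplacian A p +
      (2 * (j + 1) * (Fintype.card σ + 2 * e + 2 * j) : R) • (quadPoly g ^ j * p) := by
  induction j with
  | zero => simpa using laplacian_quadPoly_mul g hA hg hAg hp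
  | succ j ih =>
    have hhom := ((isHomogeneous_quadPoly g).pow (j + 1)).mul hp
    rw [pow_succ', mul_assoc, laplacian_quadPoly_mul g hA hg hAg hhom, ih]
    simp only [smul_eq_C_mul, map_mul, map_add, map_one, map_natCast, map_ofNat]
    push_cast
    ring

end QuadPoly

section Surjectivity

variable {k : Type*} [Field k] [CharZero k] [Nonempty σ] [DecidableEq σ] {A g : Matrix σ σ k}

theorem quadPoly_pow_mul_mem_map_laplacian (hA : A.IsSymm) (hg : g.IsSymm) (hAg : A * g = 1)
    (e : ℕ) : ∀ (j : ℕ) (q : MvPolynomial σ k), q.IsHomogeneous e →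
      quadPoly g ^ j * q ∈ (homogeneousSubmodule σ k (e + 2 * j + 2)).map (laplacian A) := by
  induction e using Nat.strong_induction_on with
  | _ e ih =>
  intro j q hq
  set S := (homogeneousSubmodule σ k (e + 2 * j + 2)).map (laplacian A)
  have hc : (2 * (j + 1) * (Fintype.card σ + 2 * e + 2 * j) : k) ≠ 0 := by
    have := Fintype.card_pos (α := σ)
    exact_mod_cast (by positivity : 2 * (j + 1) * (Fintype.card σ + 2 * e + 2 * j) ≠ 0)
  have hmain : quadPoly g ^ (j + 1) * q ∈ homogeneousSubmodule σ k (e + 2 * j + 2) := by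
    have := ((isHomogeneous_quadPoly g).pow (j + 1)).mul hq
    rwa [show 2 * (j + 1) + e = e + 2 * j + 2 by ring] at this
  have hcorr : quadPoly g ^ (j + 1) * laplacian A q ∈ S := by
    rcases lt_or_ge e 2 with he | he
    · simp [laplacian_eq_zero_of_isHomogeneous A hq he]
    · have := ih (e - 2) (by omega) (j + 1) _ (hq.laplacian A)
      rwa [show e - 2 + 2 * (j + 1) + 2 = e + 2 * j + 2 by omega] at this
  have hkey : (2 * (j + 1) * (Fintype.card σ + 2 * e + 2 * j) : k) • (quadPoly g ^ j * q) =
      laplacian A (quadPoly g ^ (j + 1) * q) - quadPoly g ^ (j + 1) * laplacian A q := by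
    rw [laplacian_quadPoly_pow_mul g hA hg hAg hq, add_sub_cancel_left]
  rw [← Submodule.smul_mem_iff S hc, hkey]
  exact S.sub_mem (Submodule.mem_map_of_mem hmain) hcorr

theorem homogeneousSubmodule_le_map_laplacian (hA : A.IsSymm) (hdet : IsUnit A.det) (n : ℕ) :
    homogeneousSubmodule σ k n ≤ (homogeneousSubmodule σ k (n + 2)).map (laplacian A) :=
  fun q hq ↦ by
    simpa using quadPoly_pow_mul_mem_map_laplacian hA hA.inv (A.mul_nonsing_inv hdet) n 0 q hq

end Surjectivity

end MvPolynomial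

open MvPolynomial in
/-- `Symⁿ(k^d)` is modelled by the homogeneous polynomials of degree `n`; under this identification
the Laplacian `Δ` is `½ ∑ᵢⱼ b(eᵢ,eⱼ) ∂ᵢ∂ⱼ`. -/
theorem stmt_8 {k : Type*} [Field k] [CharZero k] (d n : ℕ) (hd : 2 ≤ d) (hn : 2 ≤ n)
    (B : LinearMap.BilinForm k (Fin d → k)) (hB : B.Nondegenerate)
    (hsymm : ∀ x y, B x y = B y x) :
    ∀ q ∈ homogeneousSubmodule (Fin d) k (n - 2),
      ∃ p ∈ homogeneousSubmodule (Fin d) k n,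
        ((1 : k) / 2) • ∑ i : Fin d, ∑ j : Fin d,
            B (Pi.single i 1) (Pi.single j 1) • pderiv i (pderiv j p) = q := by
  intro q hq
  have : Nonempty (Fin d) := ⟨⟨0, by omega⟩⟩
  have hA : B.toMatrix'.IsSymm := Matrix.IsSymm.ext fun i j ↦ by simp [hsymm]
  have hdet : IsUnit B.toMatrix'.det := by
    rw [isUnit_iff_ne_zero, ← Matrix.nondegenerate_iff_det_ne_zero]
    exact hB.toMatrix'
  have hsurj := homogeneousSubmodule_le_map_laplacian hA hdet (n - 2) hq
  rw [Nat.sub_add_cancel hn] at hsurj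
  obtain ⟨p, hp, hLp⟩ := hsurj
  refine ⟨(2 : k) • p, Submodule.smul_mem _ _ hp, ?_⟩
  simp only [← LinearMap.BilinForm.toMatrix'_apply, ← laplacian_apply, map_smul, hLp, smul_smul]
  norm_num
end

section
/- Let (V, q) be a quadratic space over a field of characteristic zero, and let so(V,q) act on Symⁿ(V) by derivations (extending the action on V). Then the Laplacian Δ : Symⁿ(V) → Sym^{n-2}(V), defined on pure tensors by Δ(v₁⋯vₙ) = Σ_{i<j} b(vᵢ,vⱼ)·v₁⋯v̂ᵢ⋯v̂ⱼ⋯vₙ, is a morphism of so(V,q)-representations: Δ(A·x) = A·Δ(x) for all A ∈ so(V,q) and x ∈ Symⁿ(V). -/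
open MvPolynomial

lemma my_pderiv_comm {k : Type*} [Field k] {d : ℕ} (i j : Fin d)
    (p : MvPolynomial (Fin d) k) :
    pderiv i (pderiv j p) = pderiv j (pderiv i p) := by
  induction p using MvPolynomial.induction_on with
  | C a => simp
  | add p q hp hq => simp [hp, hq]
  | mul_X p n ih =>
    simp only [pderiv_mul, map_add, pderiv_X, ih, Pi.single_apply, apply_ite,
      mul_ite, ite_mul, mul_one, mul_zero, one_mul, zero_mul, map_zero]
    split_ifs <;> ring

/-- The Laplacian `Δ = ½ Σ_{i,j} b(eᵢ,eⱼ) ∂ᵢ∂ⱼ` of a quadratic space (polynomial model of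
symmetric powers of `k^d`) commutes with the derivation action of any skew-adjoint
endomorphism `A`, i.e. `Δ` is a morphism of `so(V,q)`-representations. -/
theorem stmt_9 {k : Type*} [Field k] [CharZero k] (d : ℕ)
    (B : LinearMap.BilinForm k (Fin d → k))
    (A : Module.End k (Fin d → k)) (hA : ∀ x y, B (A x) y + B x (A y) = 0)
    (p : MvPolynomial (Fin d) k) :
    (fun q : MvPolynomial (Fin d) k =>
        ((1 : k) / 2) • ∑ i : Fin d, ∑ j : Fin d,
          B (Pi.single i 1) (Pi.single j 1) • pderiv i (pderiv j q))
      ((∑ i : Fin d, (∑ j : Fin d, C (A (Pi.single i 1) j) * X j) * pderiv i p)) =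
    (∑ i : Fin d, (∑ j : Fin d, C (A (Pi.single i 1) j) * X j) *
        pderiv i (((1 : k) / 2) • ∑ i' : Fin d, ∑ j' : Fin d,
          B (Pi.single i' 1) (Pi.single j' 1) • pderiv i' (pderiv j' p))) := by
  classical
  simp only []
  set a : Fin d → Fin d → k := fun i j => A (Pi.single i 1) j with ha
  set b : Fin d → Fin d → k := fun i j => B (Pi.single i 1) (Pi.single j 1) with hb
  set L : Fin d → MvPolynomial (Fin d) k := fun i => ∑ j, C (a i j) * X j with hLdef
  set f : Fin d → Fin d → MvPolynomial (Fin d) k := fun i m => pderiv i (pderiv m p) with hf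
  -- skew-adjointness in coordinates
  have hAe : ∀ i : Fin d, A (Pi.single i 1) = ∑ m, a i m • (Pi.single m 1 : Fin d → k) := by
    intro i
    funext j
    simp [Finset.sum_apply, Pi.single_apply, ha]
  have skew : ∀ i j, (∑ m, a i m * b m j) + (∑ m, a j m * b i m) = 0 := by
    intro i j
    have h := hA (Pi.single i 1) (Pi.single j 1)
    rw [hAe i, hAe j] at h
    simpa [map_sum, smul_eq_mul, hb] using h
  -- derivative of L
  have hL : ∀ i j, pderiv j (L i) = C (a i j) := by
    intro i j
    rw [hLdef]
    simp only [map_sum, pderiv_C_mul, pderiv_X, Pi.single_apply]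
    simp [Finset.sum_ite_eq, eq_comm]
  -- third-derivative commutation
  have h3 : ∀ m i j : Fin d, pderiv m (pderiv i (pderiv j p)) = pderiv i (pderiv j (pderiv m p)) := by
    intro m i j
    rw [my_pderiv_comm m i (pderiv j p), my_pderiv_comm m j p]
  -- expand each summand of the LHS
  have expand : ∀ i j, b i j • pderiv i (pderiv j (∑ m, L m * pderiv m p)) =
      ∑ m, ((b i j * a m j) • f i m + (b i j * a m i) • f j m
        + b i j • (L m * pderiv i (pderiv j (pderiv m p)))) := by
    intro i j
    rw [map_sum, map_sum, Finset.smul_sum]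
    refine Finset.sum_congr rfl fun m _ => ?_
    rw [pderiv_mul, hL, map_add, pderiv_C_mul, pderiv_mul, hL]
    simp only [C_mul', smul_smul, smul_add, add_assoc, hf]
  have step1 : (∑ i, ∑ j, b i j • pderiv i (pderiv j (∑ m, L m * pderiv m p)))
      = ((∑ i, ∑ j, ∑ m, (b i j * a m j) • f i m)
        + (∑ i, ∑ j, ∑ m, (b i j * a m i) • f j m))
        + (∑ i, ∑ j, ∑ m, b i j • (L m * pderiv i (pderiv j (pderiv m p)))) := by
    simp_rw [expand, Finset.sum_add_distrib]
  have hT1 : (∑ i, ∑ j, ∑ m, (b i j * a m j) • f i m)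
      = ∑ i, ∑ m, (∑ j, b i j * a m j) • f i m := by
    refine Finset.sum_congr rfl fun i _ => ?_
    rw [Finset.sum_comm]
    exact Finset.sum_congr rfl fun m _ => (Finset.sum_smul).symm
  have hT2 : (∑ i, ∑ j, ∑ m, (b i j * a m i) • f j m)
      = ∑ i, ∑ m, (∑ j, b j i * a m j) • f i m := by
    rw [Finset.sum_comm]
    refine Finset.sum_congr rfl fun i _ => ?_
    rw [Finset.sum_comm]
    exact Finset.sum_congr rfl fun m _ => (Finset.sum_smul).symm
  have hcancel : (∑ i, ∑ m, (∑ j, b i j * a m j) • f i m)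
      + (∑ i, ∑ m, (∑ j, b j i * a m j) • f i m) = 0 := by
    set c : Fin d → Fin d → k := fun i m => (∑ j, b i j * a m j) + (∑ j, b j i * a m j) with hc
    rw [← Finset.sum_add_distrib]
    simp_rw [← Finset.sum_add_distrib, ← add_smul]
    have hanti : ∀ i m, c m i = - c i m := by
      intro i m
      have h1 := skew m i
      have h2 := skew i m
      simp only [hc]
      have e1 : (∑ j, b m j * a i j) = - ∑ j, b j i * a m j := by
        rw [eq_neg_iff_add_eq_zero, ← h1]
        rw [add_comm]
        congr 1 <;> exact Finset.sum_congr rfl fun t _ => mul_comm _ _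
      have e2 : (∑ j, b j m * a i j) = - ∑ j, b i j * a m j := by
        rw [eq_neg_iff_add_eq_zero, ← h2]
        congr 1 <;> exact Finset.sum_congr rfl fun t _ => mul_comm _ _
      rw [e1, e2]; ring
    have hsym : ∀ i m : Fin d, f m i = f i m := fun i m => my_pderiv_comm m i p
    have key : (∑ i, ∑ m, c i m • f i m) = -(∑ i, ∑ m, c i m • f i m) := by
      calc (∑ i, ∑ m, c i m • f i m) = ∑ x, ∑ y, c y x • f y x := Finset.sum_comm
        _ = ∑ x, ∑ y, -(c x y • f x y) := by
            refine Finset.sum_congr rfl fun x _ => Finset.sum_congr rfl fun y _ => ?_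
            rw [hanti x y, hsym x y, neg_smul]
        _ = -(∑ i, ∑ m, c i m • f i m) := by
            simp [Finset.sum_neg_distrib]
    have h2 : (2:k) • (∑ i, ∑ m, c i m • f i m) = 0 := by
      rw [two_smul]
      nth_rewrite 2 [key]
      rw [add_neg_cancel]
    rcases smul_eq_zero.mp h2 with h | h
    · exact absurd h (by norm_num)
    · exact h
  have hRHS : (∑ i, L i * pderiv i (((1:k)/2) • ∑ i', ∑ j', b i' j' • f i' j'))
      = ((1:k)/2) • ∑ i, ∑ j, ∑ m, b i j • (L m * pderiv i (pderiv j (pderiv m p))) := by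
    have hterm : ∀ m : Fin d, L m * pderiv m (((1:k)/2) • ∑ i', ∑ j', b i' j' • f i' j')
        = ((1:k)/2) • ∑ i', ∑ j', b i' j' • (L m * pderiv i' (pderiv j' (pderiv m p))) := by
      intro m
      rw [Derivation.map_smul, map_sum, mul_smul_comm, Finset.mul_sum]
      congr 1
      refine Finset.sum_congr rfl fun i' _ => ?_
      rw [map_sum, Finset.mul_sum]
      refine Finset.sum_congr rfl fun j' _ => ?_
      rw [Derivation.map_smul, mul_smul_comm]
      simp only [hf]
      rw [h3 m i' j']
    calc (∑ i, L i * pderiv i (((1:k)/2) • ∑ i', ∑ j', b i' j' • f i' j'))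
        = ∑ m, ((1:k)/2) • ∑ i', ∑ j', b i' j' • (L m * pderiv i' (pderiv j' (pderiv m p))) :=
          Finset.sum_congr rfl fun m _ => hterm m
      _ = ((1:k)/2) • ∑ m, ∑ i, ∑ j, b i j • (L m * pderiv i (pderiv j (pderiv m p))) :=
          (Finset.smul_sum).symm
      _ = ((1:k)/2) • ∑ i, ∑ j, ∑ m, b i j • (L m * pderiv i (pderiv j (pderiv m p))) := by
          rw [Finset.sum_comm]
          exact congrArg _ (Finset.sum_congr rfl fun i _ => Finset.sum_comm)
  rw [step1, hT1, hT2, hcancel, zero_add, hRHS]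
end
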